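/- Any subset A of Z₂ⁿ with diameter at most 2s+1 (where 2s+1 < n−1) satisfies |A| ≤ S_n(s) + C(n−1, s), where S_n(s) = ∑_{i=0}^{s} C(n,i). Moreover |B_s(x) ∪ B_s(y)| = S_n(s) + C(n−1,s) when d(x,y) = 1. (Kleitman's theorem, odd case.) -/

import Mathlib

/-!
Identify `Z₂ⁿ` with the subsets of `{0, …, n - 1}`, so that the Hamming distance becomes
`#(A ∆ B)`. Down-compressions (erase `j`) and left-shifts (replace `j` by some `i < j`) are
UV-compressions with `#u + #v ≤ 2`; these keep the size of a family and do not increase its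
diameter. A family of least total weight among those with the same size and diameter is
therefore a lower set and shifted. For such a family of diameter `2s` on `{0, …, M}` the sets
containing `M` have, after removing `M`, diameter `2s - 2`, since `M` can be shifted to an
element outside any two of them; induction on `M` and Pascal's rule give Kleitman's bound
`∑_{k ≤ s} C(M + 1, k)` for even diameter, the base case `M = 2s` being the absence of
complementary pairs.

For diameter `2s + 1`, the sets of one size parity are at even distances, hence at distance
`≤ 2s`, and remain distinct after deleting the last coordinate. Each parity class thus has at
most `∑_{k ≤ s} C(n - 1, k)` members, and twice this is `S_n(s) + C(n - 1, s)`. The same number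
counts two balls of radius `s` around adjacent points: according to the coordinate where the
centres differ, their union splits into two disjoint copies of a ball in dimension `n - 1`.
-/

open Finset UV
open scoped FinsetFamily symmDiff

namespace Kleitman

section Compression

variable {α : Type*} [GeneralizedBooleanAlgebra α] [DecidableRel (@Disjoint α _ _)]
  [DecidableLE α] [DecidableEq α] {u v : α} {s : Finset α}

theorem sum_compression_lt (w : α → ℕ) (hw : ∀ a, compress u v a ≠ a → w (compress u v a) < w a)
    (hs : ∃ a ∈ s, compress u v a ∉ s) : ∑ a ∈ 𝓒 u v s, w a < ∑ a ∈ s, w a := by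
  obtain ⟨a, ha, hca⟩ := hs
  rw [compression, sum_union compress_disjoint, filter_image, sum_image compress_injOn,
    ← sum_filter_add_sum_filter_not s (fun a => compress u v a ∈ s)]
  refine Nat.add_lt_add_left (sum_lt_sum_of_nonempty ?_ fun b hb => ?_) _
  · exact ⟨a, mem_filter.2 ⟨ha, hca⟩⟩
  · exact hw b fun h => (mem_filter.1 hb).2 (by rw [h]; exact (mem_filter.1 hb).1)

end Compression

section SymmDiff

variable {β : Type*} [DecidableEq β] {u v A B : Finset β}

theorem card_symmDiff_add_two_mul_card_inter (A B : Finset β) :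
    #(A ∆ B) + 2 * #(A ∩ B) = #A + #B := by
  have hA := card_sdiff_add_card_inter A B
  have hB := card_sdiff_add_card_inter B A
  rw [inter_comm] at hB
  rw [Finset.symmDiff_def, card_union_of_disjoint disjoint_sdiff_sdiff]
  omega

theorem even_card_symmDiff_iff (A B : Finset β) : Even #(A ∆ B) ↔ (Even #A ↔ Even #B) := by
  rw [← Nat.even_add, ← card_symmDiff_add_two_mul_card_inter, Nat.even_add]
  simp

theorem compress_eq_self_of_not (h : ¬(Disjoint u A ∧ v ⊆ A)) : compress u v A = A :=
  if_neg h

theorem disjoint_and_subset_of_compress_ne (h : compress u v A ≠ A) : Disjoint u A ∧ v ⊆ A := by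
  by_contra h'
  exact h (compress_eq_self_of_not h')

theorem compress_eq_symmDiff (huv : Disjoint u v) (huA : Disjoint u A) (hvA : v ⊆ A) :
    compress u v A = A ∆ (u ∪ v) := by
  rw [compress_of_disjoint_of_le huA hvA]
  ext x
  have := @disjoint_left _ u v
  have := @disjoint_left _ u A
  have := @hvA x
  simp only [sup_eq_union, mem_sdiff, mem_union, mem_symmDiff]
  tauto

theorem compress_symmDiff_comm (huv : Disjoint u v) (hA : compress u v A ≠ A)
    (hB : compress u v B ≠ B) : compress u v A ∆ B = A ∆ compress u v B := by
  obtain ⟨huA, hvA⟩ := disjoint_and_subset_of_compress_ne hA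
  obtain ⟨huB, hvB⟩ := disjoint_and_subset_of_compress_ne hB
  rw [compress_eq_symmDiff huv huA hvA, compress_eq_symmDiff huv huB hvB, symmDiff_right_comm,
    symmDiff_assoc]

theorem card_compress_symmDiff_le_of_not (huv : Disjoint u v) (hcard : #u + #v ≤ 2)
    (huA : Disjoint u A) (hvA : v ⊆ A) (hB : ¬(Disjoint u B ∧ v ⊆ B)) :
    #(compress u v A ∆ B) ≤ #(A ∆ B) := by
  -- compressing `A` flips the at most two points of `u ∪ v`, at least one of which already
  -- separates `A` from the uncompressed `B`
  have hmeet : ((A ∆ B) ∩ (u ∪ v)).Nonempty := by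
    rcases not_and_or.1 hB with hu | hv
    · obtain ⟨x, hxu, hxB⟩ := not_disjoint_iff.1 hu
      exact ⟨x, by simp [mem_symmDiff, hxB, disjoint_left.1 huA hxu, hxu]⟩
    · obtain ⟨x, hxv, hxB⟩ := not_subset.1 hv
      exact ⟨x, by simp [mem_symmDiff, hxB, hvA hxv, hxv]⟩
  have := card_symmDiff_add_two_mul_card_inter (A ∆ B) (u ∪ v)
  have := card_union_le u v
  have := hmeet.card_pos
  rw [compress_eq_symmDiff huv huA hvA, symmDiff_right_comm]
  omega

theorem card_compress_symmDiff_compress_le (huv : Disjoint u v) (hcard : #u + #v ≤ 2)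
    (A B : Finset β) : #(compress u v A ∆ compress u v B) ≤ #(A ∆ B) := by
  by_cases hA : Disjoint u A ∧ v ⊆ A <;> by_cases hB : Disjoint u B ∧ v ⊆ B
  · rw [compress_eq_symmDiff huv hA.1 hA.2, compress_eq_symmDiff huv hB.1 hB.2,
      symmDiff_symmDiff_symmDiff_comm, symmDiff_self, symmDiff_bot]
  · rw [compress_eq_self_of_not hB]
    exact card_compress_symmDiff_le_of_not huv hcard hA.1 hA.2 hB
  · rw [compress_eq_self_of_not hA, symmDiff_comm, symmDiff_comm A]
    exact card_compress_symmDiff_le_of_not huv hcard hB.1 hB.2 hA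
  · rw [compress_eq_self_of_not hA, compress_eq_self_of_not hB]

theorem compress_subset_union (u v A : Finset β) : compress u v A ⊆ A ∪ u := by
  unfold compress
  split_ifs
  exacts [sdiff_subset, subset_union_left]

def DiamLE (F : Finset (Finset β)) (d : ℕ) : Prop :=
  ∀ A ∈ F, ∀ B ∈ F, #(A ∆ B) ≤ d

theorem DiamLE.mono {F G : Finset (Finset β)} {d : ℕ} (hF : DiamLE F d) (hGF : G ⊆ F) :
    DiamLE G d :=
  fun A hA B hB => hF A (hGF hA) B (hGF hB)

theorem DiamLE.uvCompression {F : Finset (Finset β)} {d : ℕ} (huv : Disjoint u v)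
    (hcard : #u + #v ≤ 2) (hF : DiamLE F d) : DiamLE (𝓒 u v F) d := by
  have hle := card_compress_symmDiff_compress_le huv hcard
  have key : ∀ X ∈ 𝓒 u v F, ∀ B ∈ F, compress u v B ∉ F → #(X ∆ compress u v B) ≤ d := by
    intro X hX B hB hcB
    rcases mem_compression.1 hX with ⟨hXF, hcX⟩ | ⟨-, A, hA, rfl⟩
    · by_cases hXfix : compress u v X = X
      · rw [← hXfix]
        exact (hle X B).trans (hF X hXF B hB)
      · have hBmove : compress u v B ≠ B := fun h => hcB (by rw [h]; exact hB)
        rw [← compress_symmDiff_comm huv hXfix hBmove]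
        exact hF _ hcX B hB
    · exact (hle A B).trans (hF A hA B hB)
  intro X hX Y hY
  rcases mem_compression.1 hY with ⟨hYF, -⟩ | ⟨hYF, B, hB, rfl⟩
  · rcases mem_compression.1 hX with ⟨hXF, -⟩ | ⟨hXF, A, hA, rfl⟩
    · exact hF X hXF Y hYF
    · rw [symmDiff_comm]
      exact key Y hY A hA hXF
  · exact key X hX B hB hYF

theorem insert_symmDiff_insert_of_notMem {a : β}
    (hA : a ∉ A) (hB : a ∉ B) : insert a A ∆ insert a B = A ∆ B := by
  ext x
  by_cases hx : x = a
  · subst hx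
    simp [mem_symmDiff, hA, hB]
  · simp [mem_symmDiff, hx]

theorem isLowerSet_of_forall_erase_mem {F : Finset (Finset β)}
    (hF : ∀ A ∈ F, ∀ a, A.erase a ∈ F) : IsLowerSet (F : Set (Finset β)) := by
  intro A B hBA hA
  have hsdiff : ∀ T, A \ T ∈ F := fun T => T.induction_on (by simpa using hA)
    fun a T _ ih => by rw [sdiff_insert]; exact hF _ ih a
  simpa only [mem_coe, Finset.sdiff_sdiff_eq_self hBA] using hsdiff (A \ B)

theorem card_le_of_forall_sdiff_notMem {U : Finset β} {F : Finset (Finset β)}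
    (hF : F ⊆ U.powerset) (h : ∀ A ∈ F, U \ A ∉ F) :
    2 * #F ≤ 2 ^ #U := by
  have hinj : Set.InjOn (U \ ·) F := fun A hA B hB hAB => by
    rw [← Finset.sdiff_sdiff_eq_self (mem_powerset.1 (hF hA)),
      ← Finset.sdiff_sdiff_eq_self (mem_powerset.1 (hF hB))]
    exact congrArg (U \ ·) hAB
  have hdisj : Disjoint F (F.image (U \ ·)) := disjoint_right.2 fun X hX hXF => by
    obtain ⟨A, hA, rfl⟩ := mem_image.1 hX
    exact h A hA hXF
  have hsub : F ∪ F.image (U \ ·) ⊆ U.powerset :=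
    union_subset hF (image_subset_iff.2 fun _ _ => mem_powerset.2 sdiff_subset)
  have := card_le_card hsub
  rw [card_union_of_disjoint hdisj, card_image_of_injOn hinj, card_powerset] at this
  omega

end SymmDiff

theorem sum_range_choose_succ (m s : ℕ) :
    ∑ k ∈ range (s + 1), (m + 1).choose k =
      ∑ k ∈ range (s + 1), m.choose k + ∑ k ∈ range s, m.choose k := by
  rw [sum_range_succ', sum_range_succ' (fun k => m.choose k)]
  simp only [Nat.choose_succ_succ', sum_add_distrib, Nat.choose_zero_right]
  ring

theorem sum_range_choose_succ_add_choose (m s : ℕ) :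
    ∑ k ∈ range (s + 1), (m + 1).choose k + m.choose s = 2 * ∑ k ∈ range (s + 1), m.choose k := by
  rw [sum_range_choose_succ, sum_range_succ _ s]
  ring

theorem card_powerset_filter_card_le {α : Type*} (U : Finset α) (s : ℕ) :
    #{T ∈ U.powerset | #T ≤ s} = ∑ k ∈ range (s + 1), (#U).choose k := by
  rw [card_eq_sum_card_fiberwise (f := card) (t := range (s + 1))
    fun T hT => mem_range.2 (Nat.lt_succ_of_le (mem_filter.1 hT).2)]
  refine sum_congr rfl fun k hk => ?_
  rw [← card_powersetCard, powersetCard_eq_filter, filter_filter]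
  congr 1
  ext T
  simp only [mem_filter, mem_range] at hk ⊢
  constructor
  · rintro ⟨h, -, rfl⟩
    exact ⟨h, rfl⟩
  · rintro ⟨h, rfl⟩
    exact ⟨h, by omega, rfl⟩


def weight (A : Finset ℕ) : ℕ := ∑ a ∈ A, (a + 1)

theorem weight_compress_lt {u v A : Finset ℕ} (hw : weight u < weight v)
    (h : compress u v A ≠ A) : weight (compress u v A) < weight A := by
  obtain ⟨huA, hvA⟩ := disjoint_and_subset_of_compress_ne h
  have hunion := sum_union (f := fun a => a + 1) huA.symm
  have hsdiff := sum_sdiff (f := fun a => a + 1) (hvA.trans (subset_union_left (s₂ := u)))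
  rw [compress_of_disjoint_of_le huA hvA]
  unfold weight at *
  simp only [sup_eq_union] at *
  omega

def Shifted (F : Finset (Finset ℕ)) : Prop :=
  ∀ A ∈ F, ∀ ⦃i j : ℕ⦄, i < j → j ∈ A → i ∉ A → insert i (A.erase j) ∈ F

theorem compress_mem_of_minimal {M d : ℕ} {u v : Finset ℕ} {G : Finset (Finset ℕ)}
    (hGM : G ⊆ (range M).powerset) (hGd : DiamLE G d)
    (hmin : ∀ H ⊆ (range M).powerset, #H = #G → DiamLE H d →
      ∑ A ∈ G, weight A ≤ ∑ A ∈ H, weight A)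
    (huv : Disjoint u v) (hcard : #u + #v ≤ 2) (huM : u ⊆ range M) (hw : weight u < weight v) :
    ∀ A ∈ G, compress u v A ∈ G := by
  by_contra! hmove
  have hsub : 𝓒 u v G ⊆ (range M).powerset := by
    intro X hX
    rcases mem_compression.1 hX with ⟨hXG, -⟩ | ⟨-, B, hB, rfl⟩
    · exact hGM hXG
    · exact mem_powerset.2 ((compress_subset_union u v B).trans
        (union_subset (mem_powerset.1 (hGM hB)) huM))
  exact (hmin _ hsub (card_compression u v G) (hGd.uvCompression huv hcard)).not_gt
    (sum_compression_lt weight (fun A => weight_compress_lt hw) hmove)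

theorem exists_isLowerSet_shifted {M d : ℕ} {F : Finset (Finset ℕ)} (hF : F ⊆ (range M).powerset)
    (hd : DiamLE F d) : ∃ G ⊆ (range M).powerset,
      #G = #F ∧ DiamLE G d ∧ IsLowerSet (G : Set (Finset ℕ)) ∧ Shifted G := by
  classical
  obtain ⟨G, hG, hmin⟩ := exists_min_image
    {G ∈ (range M).powerset.powerset | #G = #F ∧ DiamLE G d} (fun G => ∑ A ∈ G, weight A)
    ⟨F, mem_filter.2 ⟨mem_powerset.2 hF, rfl, hd⟩⟩
  obtain ⟨hGM, hGF, hGd⟩ : G ⊆ (range M).powerset ∧ #G = #F ∧ DiamLE G d := by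
    simpa only [mem_filter, mem_powerset] using hG
  have hmin' : ∀ H ⊆ (range M).powerset, #H = #G → DiamLE H d →
      ∑ A ∈ G, weight A ≤ ∑ A ∈ H, weight A := fun H hH hHG hHd =>
    hmin H (mem_filter.2 ⟨mem_powerset.2 hH, hHG.trans hGF, hHd⟩)
  refine ⟨G, hGM, hGF, hGd, isLowerSet_of_forall_erase_mem fun A hA j => ?_,
    fun A hA i j hij hjA hiA => ?_⟩
  · by_cases hj : j ∈ A
    · have := compress_mem_of_minimal hGM hGd hmin' (disjoint_empty_left {j}) (by simp)
        (empty_subset _) (by simp [weight]) A hA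
      rwa [compress_of_disjoint_of_le (disjoint_empty_left _) (singleton_subset_iff.2 hj),
        sup_eq_union, union_empty, sdiff_singleton_eq_erase] at this
    · rwa [erase_eq_of_notMem hj]
  · have hiM : i < M := hij.trans (mem_range.1 (mem_powerset.1 (hGM hA) hjA))
    have := compress_mem_of_minimal hGM hGd hmin' (disjoint_singleton.2 hij.ne) (by simp)
      (singleton_subset_iff.2 (mem_range.2 hiM)) (by simp [weight, hij]) A hA
    rwa [compress_of_disjoint_of_le (disjoint_singleton_left.2 hiA) (singleton_subset_iff.2 hjA),
      sup_eq_union, union_comm, ← insert_eq, sdiff_singleton_eq_erase,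
      erase_insert_of_ne hij.ne] at this

theorem DiamLE.memberSubfamily {G : Finset (Finset ℕ)} {M d : ℕ}
    (hlow : IsLowerSet (G : Set (Finset ℕ))) (hshift : Shifted G) (hd : DiamLE G (d + 2))
    (hM : d + 2 < M) : DiamLE (G.memberSubfamily M) d := by
  intro A hA B hB
  obtain ⟨hAG, hMA⟩ := mem_memberSubfamily.1 hA
  obtain ⟨hBG, hMB⟩ := mem_memberSubfamily.1 hB
  have hunion : #(A ∪ B) ≤ d + 2 := by
    have hsub : insert M (A \ B) ∈ G := hlow (insert_subset_insert M sdiff_subset) hAG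
    have := hd _ hsub _ hBG
    rwa [insert_symmDiff_insert_of_notMem (fun h => hMA (mem_sdiff.1 h).1) hMB,
      sdiff_symmDiff_eq_sup] at this
  -- shifting `M` in `insert M B` down to some `j ∉ A ∪ B` gives a member of `G` at distance
  -- `#(A ∆ B) + 2` from `insert M A`
  obtain ⟨j, hj⟩ : (range M \ (A ∪ B)).Nonempty := by
    rw [← card_pos]
    have := le_card_sdiff (A ∪ B) (range M)
    rw [card_range] at this
    omega
  rw [mem_sdiff, mem_range, mem_union, not_or] at hj
  obtain ⟨hjM, hjA, hjB⟩ := hj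
  have hY : insert j B ∈ G := by
    have := hshift _ hBG hjM (mem_insert_self M B) (by simp [hjB, hjM.ne])
    rwa [erase_insert hMB] at this
  have hsplit : insert M A ∆ insert j B = insert M (insert j (A ∆ B)) := by
    ext x
    by_cases hxM : x = M
    · subst hxM
      simp [mem_symmDiff, hMB, hjM.ne']
    · by_cases hxj : x = j
      · subst hxj
        simp [mem_symmDiff, hjA, hjB, hxM]
      · simp [mem_symmDiff, hxM, hxj]
  have := hd _ hAG _ hY
  rw [hsplit, card_insert_of_notMem (by simp [mem_symmDiff, hMA, hMB, hjM.ne']),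
    card_insert_of_notMem (by simp [mem_symmDiff, hjA, hjB])] at this
  omega

theorem erase_subset_range {A : Finset ℕ} {M : ℕ} (h : A ⊆ range (M + 1)) :
    A.erase M ⊆ range M := by
  rwa [range_add_one, subset_insert_iff] at h

theorem card_le_of_diamLE_two_mul {M s : ℕ} {F : Finset (Finset ℕ)} (hF : F ⊆ (range M).powerset)
    (hM : 2 * s < M) (hd : DiamLE F (2 * s)) : #F ≤ ∑ k ∈ range (s + 1), M.choose k := by
  induction M generalizing s F with
  | zero => omega
  | succ M ih =>
    rcases Nat.eq_zero_or_pos s with rfl | hs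
    · simpa using card_le_one.2 fun A hA B hB =>
        symmDiff_eq_empty.1 (card_eq_zero.1 (Nat.le_zero.1 (hd A hA B hB)))
    rcases (show M = 2 * s ∨ 2 * s < M by omega) with rfl | hM'
    · -- no two members are complementary, since they would be at distance `2 * s + 1`
      have := card_le_of_forall_sdiff_notMem hF fun A hA hA' => by
        have := hd _ hA' A hA
        rw [sdiff_symmDiff_eq_sup, sup_eq_left.2 (mem_powerset.1 (hF hA)), card_range] at this
        omega
      rw [card_range, pow_succ, pow_mul, show 2 ^ 2 = 4 from rfl] at this
      rw [Nat.sum_range_choose_halfway]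
      omega
    obtain ⟨t, rfl⟩ : ∃ t, s = t + 1 := ⟨s - 1, by omega⟩
    obtain ⟨G, hGM, hGF, hGd, hlow, hshift⟩ := exists_isLowerSet_shifted hF hd
    rw [← hGF, ← card_memberSubfamily_add_card_nonMemberSubfamily M G,
      add_comm #(G.memberSubfamily M), sum_range_choose_succ]
    refine add_le_add (ih (fun A hA => ?_) hM' (hGd.mono (filter_subset _ _)))
      (ih (fun A hA => ?_) (by omega)
        (DiamLE.memberSubfamily hlow hshift (d := 2 * t) (by rwa [mul_add] at hGd) (by omega)))
    · obtain ⟨hAG, hMA⟩ := mem_nonMemberSubfamily.1 hA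
      rw [mem_powerset, ← erase_eq_of_notMem hMA]
      exact erase_subset_range (mem_powerset.1 (hGM hAG))
    · obtain ⟨hAG, hMA⟩ := mem_memberSubfamily.1 hA
      rw [mem_powerset, ← erase_insert hMA]
      exact erase_subset_range (mem_powerset.1 (hGM hAG))

theorem card_le_of_diamLE_of_even {M s : ℕ} {P : Finset (Finset ℕ)}
    (hP : P ⊆ (range (M + 1)).powerset) (hM : 2 * s < M) (hd : DiamLE P (2 * s + 1))
    (heven : ∀ A ∈ P, ∀ B ∈ P, Even #(A ∆ B)) : #P ≤ ∑ k ∈ range (s + 1), M.choose k := by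
  have herase : ∀ A B : Finset ℕ, A.erase M ∆ B.erase M = (A ∆ B).erase M := fun A B => by
    ext x
    simp only [mem_symmDiff, mem_erase]
    tauto
  have hinj : Set.InjOn (fun A : Finset ℕ => A.erase M) P := fun A hA B hB hAB => by
    have hempty : (A ∆ B).erase M = ∅ := by
      rw [← herase]
      simp only at hAB
      rw [hAB, symmDiff_self, bot_eq_empty]
    rcases (erase_eq_empty_iff _ _).1 hempty with h | h
    · exact symmDiff_eq_empty.1 h
    · have := heven A hA B hB
      rw [h, card_singleton] at this
      exact absurd this Nat.not_even_one
  rw [← card_image_of_injOn hinj]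
  refine card_le_of_diamLE_two_mul (fun X hX => ?_) hM fun X hX Y hY => ?_
  · obtain ⟨A, hA, rfl⟩ := mem_image.1 hX
    exact mem_powerset.2 (erase_subset_range (mem_powerset.1 (hP hA)))
  · obtain ⟨A, hA, rfl⟩ := mem_image.1 hX
    obtain ⟨B, hB, rfl⟩ := mem_image.1 hY
    obtain ⟨r, hr⟩ := heven A hA B hB
    have := hd A hA B hB
    have := card_le_card (erase_subset M (A ∆ B))
    rw [herase]
    omega

theorem card_le_of_diamLE_two_mul_add_one {M s : ℕ} {F : Finset (Finset ℕ)}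
    (hF : F ⊆ (range (M + 1)).powerset) (hM : 2 * s < M) (hd : DiamLE F (2 * s + 1)) :
    #F ≤ 2 * ∑ k ∈ range (s + 1), M.choose k := by
  rw [← card_filter_add_card_filter_not (fun A => Even #A), two_mul]
  refine add_le_add (card_le_of_diamLE_of_even ((filter_subset _ _).trans hF) hM
    (hd.mono (filter_subset _ _)) fun A hA B hB => ?_) (card_le_of_diamLE_of_even
    ((filter_subset _ _).trans hF) hM (hd.mono (filter_subset _ _)) fun A hA B hB => ?_)
  · rw [even_card_symmDiff_iff]
    exact iff_of_true (mem_filter.1 hA).2 (mem_filter.1 hB).2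
  · rw [even_card_symmDiff_iff]
    exact iff_of_false (mem_filter.1 hA).2 (mem_filter.1 hB).2

section Hamming

variable {ι : Type*} [Fintype ι] [DecidableEq ι]

def disagreeEquiv (x : ι → ZMod 2) : (ι → ZMod 2) ≃ Finset ι where
  toFun z := {j | x j ≠ z j}
  invFun T j := if j ∈ T then x j + 1 else x j
  left_inv z := funext fun j => by
    by_cases h : x j = z j
    · simp [h]
    · simpa [h] using (show ∀ a b : ZMod 2, a ≠ b → a + 1 = b by decide) _ _ h
  right_inv T := by
    ext j
    by_cases h : j ∈ T <;> simp [h]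

theorem hammingDist_eq_card_disagreeEquiv (x z : ι → ZMod 2) :
    hammingDist x z = #(disagreeEquiv x z) :=
  rfl

theorem disagreeEquiv_symmDiff (w x y : ι → ZMod 2) :
    disagreeEquiv w x ∆ disagreeEquiv w y = disagreeEquiv x y := by
  ext j
  simp only [disagreeEquiv, Equiv.coe_fn_mk, mem_symmDiff, mem_filter, mem_univ, true_and]
  generalize w j = a, x j = b, y j = c
  revert a b c
  decide

theorem card_le_of_hammingDist_le {M s : ℕ} (hM : 2 * s < M) (A : Finset (Fin (M + 1) → ZMod 2))
    (hA : ∀ x ∈ A, ∀ y ∈ A, hammingDist x y ≤ 2 * s + 1) :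
    #A ≤ 2 * ∑ k ∈ range (s + 1), M.choose k := by
  set φ : (Fin (M + 1) → ZMod 2) → Finset ℕ := fun x => (disagreeEquiv 0 x).image Fin.val
  have hφ : ∀ x y, hammingDist x y = #(φ x ∆ φ y) := fun x y => by
    rw [← image_symmDiff _ _ Fin.val_injective, card_image_of_injective _ Fin.val_injective,
      disagreeEquiv_symmDiff, hammingDist_eq_card_disagreeEquiv]
  have hφinj : Function.Injective φ :=
    (image_injective Fin.val_injective).comp (disagreeEquiv 0).injective
  rw [← card_image_of_injective A hφinj]
  refine card_le_of_diamLE_two_mul_add_one (fun X hX => ?_) hM fun X hX Y hY => ?_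
  · obtain ⟨x, -, rfl⟩ := mem_image.1 hX
    refine mem_powerset.2 fun a ha => ?_
    obtain ⟨i, -, rfl⟩ := mem_image.1 ha
    exact mem_range.2 i.isLt
  · obtain ⟨x, hx, rfl⟩ := mem_image.1 hX
    obtain ⟨y, hy, rfl⟩ := mem_image.1 hY
    rw [← hφ]
    exact hA x hx y hy

theorem card_filter_hammingDist_le_and_eq (x : ι → ZMod 2) (i : ι) (s : ℕ) :
    #{z | hammingDist x z ≤ s ∧ z i = x i} =
      ∑ k ∈ range (s + 1), (Fintype.card ι - 1).choose k := by
  rw [card_equiv (disagreeEquiv x) (t := {T ∈ (univ.erase i).powerset | #T ≤ s}),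
    card_powerset_filter_card_le, card_erase_of_mem (mem_univ i), card_univ]
  intro z
  simp [disagreeEquiv, hammingDist, subset_erase, and_comm, eq_comm]

theorem hammingDist_eq_add_one {x y z : ι → ZMod 2} {i : ι} (hxy : disagreeEquiv x y = {i})
    (hz : z i = x i) : hammingDist y z = hammingDist x z + 1 := by
  have hi : i ∉ disagreeEquiv x z := by simp [disagreeEquiv, hz]
  rw [hammingDist_eq_card_disagreeEquiv, ← disagreeEquiv_symmDiff x, hxy,
    symmDiff_eq_union (disjoint_singleton_left.2 hi), card_union_of_disjoint
    (disjoint_singleton_left.2 hi), card_singleton, add_comm, hammingDist_eq_card_disagreeEquiv]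

theorem card_ball_union_ball {x y : ι → ZMod 2} (hxy : hammingDist x y = 1) (s : ℕ) :
    #((univ.filter fun z => hammingDist x z ≤ s) ∪ univ.filter fun z => hammingDist y z ≤ s) =
      2 * ∑ k ∈ range (s + 1), (Fintype.card ι - 1).choose k := by
  obtain ⟨i, hi⟩ : ∃ i, disagreeEquiv x y = {i} := card_eq_one.1 hxy
  have hxi : x i ≠ y i := by
    have : i ∈ disagreeEquiv x y := hi ▸ mem_singleton_self i
    simpa [disagreeEquiv] using this
  have hyx : disagreeEquiv y x = {i} := by
    rw [← hi]
    ext j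
    simp [disagreeEquiv, ne_comm]
  -- every `z` agrees at `i` with exactly one of `x`, `y`, and is then closer to that one
  have hsplit : ((univ.filter fun z => hammingDist x z ≤ s) ∪
      univ.filter fun z => hammingDist y z ≤ s) =
      (univ.filter fun z => hammingDist x z ≤ s ∧ z i = x i) ∪
        univ.filter fun z => hammingDist y z ≤ s ∧ z i = y i := by
    ext z
    simp only [mem_union, mem_filter, mem_univ, true_and]
    refine ⟨fun h => ?_, fun h => h.imp And.left And.left⟩
    by_cases hz : z i = x i
    · have := hammingDist_eq_add_one hi hz
      exact Or.inl ⟨h.elim id fun _ => by omega, hz⟩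
    · have hzy : z i = y i := (show ∀ a b c : ZMod 2, a ≠ b → c ≠ a → c = b by decide) _ _ _ hxi hz
      have := hammingDist_eq_add_one hyx hzy
      exact Or.inr ⟨h.elim (fun _ => by omega) id, hzy⟩
  have hdisj : Disjoint (univ.filter fun z => hammingDist x z ≤ s ∧ z i = x i)
      (univ.filter fun z => hammingDist y z ≤ s ∧ z i = y i) := by
    rw [disjoint_filter]
    rintro z - ⟨-, hzx⟩ ⟨-, hzy⟩
    exact hxi (hzx.symm.trans hzy)
  rw [hsplit, card_union_of_disjoint hdisj, card_filter_hammingDist_le_and_eq,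
    card_filter_hammingDist_le_and_eq, two_mul]

end Hamming

end Kleitman

open Kleitman

theorem stmt_16 (n s : ℕ) (hn : 2 * s + 1 < n - 1) :
    (∀ A : Finset (Fin n → ZMod 2),
      (∀ x ∈ A, ∀ y ∈ A, hammingDist x y ≤ 2 * s + 1) →
        A.card ≤ (∑ i ∈ Finset.range (s + 1), n.choose i) + (n - 1).choose s) ∧
      ∀ x y : Fin n → ZMod 2, hammingDist x y = 1 →
        ((Finset.univ.filter (fun z : Fin n → ZMod 2 => hammingDist x z ≤ s)) ∪
          (Finset.univ.filter (fun z : Fin n → ZMod 2 => hammingDist y z ≤ s))).card =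
          (∑ i ∈ Finset.range (s + 1), n.choose i) + (n - 1).choose s := by
  obtain ⟨M, rfl⟩ : ∃ M, n = M + 1 := ⟨n - 1, by omega⟩
  rw [Nat.add_sub_cancel, sum_range_choose_succ_add_choose]
  refine ⟨fun A hA => card_le_of_hammingDist_le (by omega) A hA, fun x y hxy => ?_⟩
  rw [card_ball_union_ball hxy, Fintype.card_fin, Nat.add_sub_cancel]
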